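/- Main corollary: under the same assumptions, if 0 ∉ Δ(𝕊) where Δ(𝕊) = {Δ(e^{iθ}) : θ ∈ [0,2π]}, then the equation Δ(z) = 0 has exactly r − Ind_{Δ(𝕊)}(0) solutions (with multiplicity) in {|z| > 1}. -/

import Mathlib

/-!
Over `ℂ`, `det C(z) = c ∏ (z - a)` over its `m` roots, and continuous polar lifts of a product
add. On the unit circle `e^{it} - a` winds once around `0` when `|a| < 1` and not at all when
`|a| > 1`, while `a_{-r}/(a₀ - e^{it})` winds `-1` times. Hence
`n = #{roots in the disk} - (m - r)`, and the other `m - #{roots in the disk}` roots, all outside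
the closed disk, number `r - n`. The winding number is well defined: two continuous lifts of the
argument differ by a continuous `2πℤ`-valued, hence constant, function.
-/

open Polynomial Real

/-- `IsWindingNumber c n` : the closed curve `c : [0,2π] → ℂ \ {0}` winds `n` times
around the origin, witnessed by continuous polar lifts. -/
def IsWindingNumber (c : ℝ → ℂ) (n : ℤ) : Prop :=
  ∃ ρ θ : ℝ → ℝ, ContinuousOn ρ (Set.Icc 0 (2 * π)) ∧ ContinuousOn θ (Set.Icc 0 (2 * π)) ∧
    (∀ t ∈ Set.Icc 0 (2 * π), (0 : ℝ) < ρ t ∧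
      c t = (ρ t : ℂ) * Complex.exp ((θ t : ℂ) * Complex.I)) ∧
    θ (2 * π) - θ 0 = 2 * π * n

open Complex

theorem Complex.sub_mem_zmultiples_of_ofReal_mul_exp_eq {ρ ρ' θ θ' : ℝ} (hρ : 0 < ρ)
    (hρ' : 0 < ρ') (h : (ρ : ℂ) * exp (θ * I) = ρ' * exp (θ' * I)) :
    θ - θ' ∈ AddSubgroup.zmultiples (2 * π) := by
  have hρρ' : ρ = ρ' := by
    simpa [norm_exp_ofReal_mul_I, abs_of_pos hρ, abs_of_pos hρ'] using congrArg (‖·‖) h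
  subst hρρ'
  obtain ⟨k, hk⟩ := exp_eq_exp_iff_exists_int.1 (mul_left_cancel₀ (ofReal_ne_zero.2 hρ.ne') h)
  refine AddSubgroup.mem_zmultiples_iff.2 ⟨k, ?_⟩
  have hk' : ((k * (2 * π) : ℝ) : ℂ) * I = ((θ - θ' : ℝ) : ℂ) * I := by
    push_cast
    linear_combination -hk
  simpa only [zsmul_eq_mul, ofReal_inj] using mul_right_cancel₀ I_ne_zero hk'

namespace IsWindingNumber

variable {c c' c₁ c₂ : ℝ → ℂ} {n n' n₁ n₂ : ℤ}

theorem congr (hc : IsWindingNumber c n) (h : Set.EqOn c c' (Set.Icc 0 (2 * π))) :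
    IsWindingNumber c' n := by
  obtain ⟨ρ, θ, hρ, hθ, hpolar, hn⟩ := hc
  exact ⟨ρ, θ, hρ, hθ, fun t ht => ⟨(hpolar t ht).1, h ht ▸ (hpolar t ht).2⟩, hn⟩

theorem unique (h : IsWindingNumber c n) (h' : IsWindingNumber c n') : n = n' := by
  obtain ⟨ρ, θ, -, hθ, hpolar, hn⟩ := h
  obtain ⟨ρ', θ', -, hθ', hpolar', hn'⟩ := h'
  have hmaps : Set.MapsTo (fun t => θ t - θ' t) (Set.Icc 0 (2 * π))
      (AddSubgroup.zmultiples (2 * π)) := fun t ht =>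
    sub_mem_zmultiples_of_ofReal_mul_exp_eq (hpolar t ht).1 (hpolar' t ht).1
      ((hpolar t ht).2.symm.trans (hpolar' t ht).2)
  have h2π : (0 : ℝ) ≤ 2 * π := by positivity
  have hconst : θ 0 - θ' 0 = θ (2 * π) - θ' (2 * π) :=
    isPreconnected_Icc.constant_of_mapsTo
      (isDiscrete_iff_discreteTopology.2
        (inferInstanceAs (DiscreteTopology (AddSubgroup.zmultiples (2 * π)))))
      (hθ.sub hθ') hmaps (Set.left_mem_Icc.2 h2π) (Set.right_mem_Icc.2 h2π)
  have : 2 * π * (n : ℝ) = 2 * π * n' := by linarith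
  exact_mod_cast mul_left_cancel₀ (by positivity) this

theorem mul (h₁ : IsWindingNumber c₁ n₁) (h₂ : IsWindingNumber c₂ n₂) :
    IsWindingNumber (fun t => c₁ t * c₂ t) (n₁ + n₂) := by
  obtain ⟨ρ₁, θ₁, hρ₁, hθ₁, hpolar₁, hn₁⟩ := h₁
  obtain ⟨ρ₂, θ₂, hρ₂, hθ₂, hpolar₂, hn₂⟩ := h₂
  refine ⟨fun t => ρ₁ t * ρ₂ t, fun t => θ₁ t + θ₂ t, hρ₁.mul hρ₂, hθ₁.add hθ₂,
    fun t ht => ?_, ?_⟩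
  · obtain ⟨hpos₁, hc₁⟩ := hpolar₁ t ht
    obtain ⟨hpos₂, hc₂⟩ := hpolar₂ t ht
    refine ⟨mul_pos hpos₁ hpos₂, ?_⟩
    dsimp only
    rw [hc₁, hc₂]
    push_cast
    rw [add_mul, Complex.exp_add]
    ring
  · push_cast
    linarith

theorem inv (h : IsWindingNumber c n) : IsWindingNumber (fun t => (c t)⁻¹) (-n) := by
  obtain ⟨ρ, θ, hρ, hθ, hpolar, hn⟩ := h
  refine ⟨fun t => (ρ t)⁻¹, fun t => -θ t, hρ.inv₀ fun t ht => (hpolar t ht).1.ne', hθ.neg,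
    fun t ht => ⟨inv_pos.2 (hpolar t ht).1, ?_⟩, ?_⟩
  · dsimp only
    rw [(hpolar t ht).2, mul_inv, ← Complex.exp_neg]
    push_cast
    rw [neg_mul]
  · push_cast
    linarith

theorem const {z : ℂ} (hz : z ≠ 0) : IsWindingNumber (fun _ => z) 0 :=
  ⟨fun _ => ‖z‖, fun _ => arg z, continuousOn_const, continuousOn_const,
    fun _ _ => ⟨norm_pos_iff.2 hz, (norm_mul_exp_arg_mul_I z).symm⟩, by simp⟩

theorem pow (h : IsWindingNumber c n) (k : ℕ) :
    IsWindingNumber (fun t => c t ^ k) (k * n) := by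
  induction k with
  | zero => simpa using const one_ne_zero
  | succ k ih =>
    simpa only [pow_succ, Nat.cast_succ, add_one_mul] using ih.mul h

theorem of_forall_re_pos (hc : ContinuousOn c (Set.Icc 0 (2 * π)))
    (hre : ∀ t ∈ Set.Icc 0 (2 * π), 0 < (c t).re) (hper : c (2 * π) = c 0) :
    IsWindingNumber c 0 := by
  have hne : ∀ t ∈ Set.Icc 0 (2 * π), c t ≠ 0 := fun t ht h0 => by
    simpa [h0] using hre t ht
  refine ⟨fun t => ‖c t‖, fun t => arg (c t), continuous_norm.comp_continuousOn hc,
    fun t ht => (continuousAt_arg (Or.inl (hre t ht))).comp_continuousWithinAt (hc t ht),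
    fun t ht => ⟨norm_pos_iff.2 (hne t ht), (norm_mul_exp_arg_mul_I _).symm⟩, by simp [hper]⟩

theorem exp_I_mul : IsWindingNumber (fun t : ℝ => exp (I * t)) 1 :=
  ⟨fun _ => 1, id, continuousOn_const, continuousOn_id,
    fun t _ => ⟨one_pos, by simp [mul_comm I]⟩, by simp⟩

/-- `e^{it} - a = e^{it} (1 - a e^{-it})`, and the second factor stays in the right half-plane. -/
theorem exp_I_mul_sub_of_norm_lt_one {a : ℂ} (ha : ‖a‖ < 1) :
    IsWindingNumber (fun t : ℝ => exp (I * t) - a) 1 := by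
  have hright : IsWindingNumber (fun t : ℝ => 1 - a * exp (-(I * t))) 0 := by
    refine of_forall_re_pos (by fun_prop) (fun t _ => ?_) ?_
    · have hsmall : (a * exp (-(I * t))).re < 1 :=
        (re_le_norm _).trans_lt (by
          rwa [norm_mul, ← mul_neg, ← ofReal_neg, norm_exp_I_mul_ofReal, mul_one])
      simpa only [sub_re, one_re, sub_pos] using hsmall
    · simp [mul_comm I, Complex.exp_neg]
  have hprod := exp_I_mul.mul hright
  rw [add_zero] at hprod
  refine hprod.congr fun t _ => ?_
  simp only [mul_sub, mul_one, mul_left_comm _ a, ← Complex.exp_add, add_neg_cancel,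
    Complex.exp_zero]

/-- `e^{it} - a = -a (1 - e^{it}/a)`, and the second factor stays in the right half-plane. -/
theorem exp_I_mul_sub_of_one_lt_norm {a : ℂ} (ha : 1 < ‖a‖) :
    IsWindingNumber (fun t : ℝ => exp (I * t) - a) 0 := by
  have ha0 : a ≠ 0 := norm_pos_iff.1 (one_pos.trans ha)
  have hright : IsWindingNumber (fun t : ℝ => 1 - exp (I * t) / a) 0 := by
    refine of_forall_re_pos (by fun_prop) (fun t _ => ?_) ?_
    · have hsmall : (exp (I * t) / a).re < 1 :=
        (re_le_norm _).trans_lt (by simpa [norm_div] using inv_lt_one_of_one_lt₀ ha)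
      simpa only [sub_re, one_re, sub_pos] using hsmall
    · simp [mul_comm I]
  have hprod := (const (neg_ne_zero.2 ha0)).mul hright
  rw [zero_add] at hprod
  refine hprod.congr fun t _ => ?_
  field_simp
  ring

theorem multiset_prod_exp_I_mul_sub (s : Multiset ℂ) (hs : ∀ a ∈ s, ‖a‖ ≠ 1) :
    IsWindingNumber (fun t : ℝ => (s.map fun a => exp (I * t) - a).prod)
      (s.filter (‖·‖ < 1)).card := by
  induction s using Multiset.induction with
  | empty => simpa using const one_ne_zero
  | cons a s ih =>
    have hrest := ih fun b hb => hs b (Multiset.mem_cons_of_mem hb)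
    simp only [Multiset.map_cons, Multiset.prod_cons, Multiset.filter_cons]
    by_cases ha : ‖a‖ < 1
    · simpa [ha, add_comm] using (exp_I_mul_sub_of_norm_lt_one ha).mul hrest
    · have ha' : 1 < ‖a‖ := (not_lt.1 ha).lt_of_ne' (hs a (Multiset.mem_cons_self a s))
      simpa [ha] using (exp_I_mul_sub_of_one_lt_norm ha').mul hrest

theorem eval_exp_I_mul {p : ℂ[X]} (hp : p ≠ 0) (hroots : ∀ a ∈ p.roots, ‖a‖ ≠ 1) :
    IsWindingNumber (fun t : ℝ => p.eval (exp (I * t))) (p.roots.filter (‖·‖ < 1)).card := by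
  have hfactor : ∀ z, p.eval z = p.leadingCoeff * (p.roots.map fun a => z - a).prod := by
    intro z
    conv_lhs => rw [(IsAlgClosed.splits p).eq_prod_roots]
    simp [eval_multiset_prod, Multiset.map_map]
  simpa [hfactor] using
    (const (leadingCoeff_ne_zero.2 hp)).mul (multiset_prod_exp_I_mul_sub p.roots hroots)

theorem div_sub_exp_I_mul {a b : ℂ} (hb : b ≠ 0) (ha : ‖a‖ < 1) :
    IsWindingNumber (fun t : ℝ => b / (a - exp (I * t))) (-1) := by
  have hsub : IsWindingNumber (fun t : ℝ => a - exp (I * t)) 1 := by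
    simpa using (const (neg_ne_zero.2 one_ne_zero)).mul (exp_I_mul_sub_of_norm_lt_one ha)
  simpa [div_eq_mul_inv] using (const hb).mul hsub.inv

end IsWindingNumber

theorem main_corollary_general (r m : ℕ) (hrm : r ≤ m)
    (am am0 : ℂ) (ham : am ≠ 0) (ha0 : ‖am0‖ < 1)
    (D : Polynomial ℂ) (hDdeg : D.natDegree = m) (hD0 : D ≠ 0)
    (Δ : ℂ → ℂ)
    (hΔ : ∀ z : ℂ, 1 ≤ ‖z‖ →
      Δ z = (-1) ^ (r * (m - r)) * D.eval z * (am / (am0 - z)) ^ (m - r))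
    (hcirc : ∀ z : ℂ, ‖z‖ = 1 → Δ z ≠ 0)
    (n : ℤ)
    (hwind : IsWindingNumber (fun t : ℝ => Δ (Complex.exp (Complex.I * t))) n) :
    (((D.roots.filter (fun z => 1 < ‖z‖)).card : ℤ)) = (r : ℤ) - n := by
  have hroots : ∀ a ∈ D.roots, ‖a‖ ≠ 1 := fun a ha h1 => hcirc a h1 (by
    rw [hΔ a h1.ge, ((mem_roots hD0).1 ha).eq_zero, mul_zero, zero_mul])
  have hΔwind : IsWindingNumber (fun t : ℝ => Δ (exp (I * t)))
      (0 + (D.roots.filter (‖·‖ < 1)).card + (m - r : ℕ) * (-1)) :=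
    (((IsWindingNumber.const (by simp)).mul (IsWindingNumber.eval_exp_I_mul hD0 hroots)).mul
      ((IsWindingNumber.div_sub_exp_I_mul ham ha0).pow (m - r))).congr fun t _ =>
        (hΔ _ (norm_exp_I_mul_ofReal t).ge).symm
  have hsplit : (D.roots.filter (‖·‖ < 1)).card + (D.roots.filter (1 < ‖·‖)).card = m := by
    rw [Multiset.filter_congr (p := (1 < ‖·‖)) (q := fun z => ¬ ‖z‖ < 1)
        fun a ha => ⟨not_lt.2 ∘ le_of_lt, fun h => (not_lt.1 h).lt_of_ne' (hroots a ha)⟩,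
      ← Multiset.card_add, Multiset.filter_add_not, IsAlgClosed.card_roots_eq_natDegree, hDdeg]
  have := hwind.unique hΔwind
  omega

/-- Main corollary: if `0 ∉ Δ(𝕊)`, then `Δ(z) = 0` has exactly `r - Ind_{Δ(𝕊)}(0)`
solutions, with multiplicity, in `{|z| > 1}`. Here
`Δ(z) = (-1)^{r(m-r)} det C(z) (a_{-r}/(a₀-z))^{m-r}` with `det C` of degree `m`. -/
theorem main_corollary (r m : ℕ) (hr : 1 ≤ r) (hrm : r ≤ m)
    (am am0 : ℂ) (ham : am ≠ 0) (ha0 : ‖am0‖ < 1)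
    (D : Polynomial ℂ) (hDdeg : D.natDegree = m) (hD0 : D ≠ 0)
    (Δ : ℂ → ℂ)
    (hΔ : ∀ z : ℂ, 1 ≤ ‖z‖ →
      Δ z = (-1) ^ (r * (m - r)) * D.eval z * (am / (am0 - z)) ^ (m - r))
    (hcirc : ∀ z : ℂ, ‖z‖ = 1 → Δ z ≠ 0)
    (n : ℤ)
    (hwind : IsWindingNumber (fun t : ℝ => Δ (Complex.exp (Complex.I * t))) n) :
    (((D.roots.filter (fun z => 1 < ‖z‖)).card : ℤ)) = (r : ℤ) - n :=
  main_corollary_general r m hrm am am0 ham ha0 D hDdeg hD0 Δ hΔ hcirc n hwind
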